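/- Suppose 5β + 2λ < 1 and β < 1/20. If u and v lie in the same connected component of the sparsified graph G̃ and at least one of them is heavy, then u and v are in 4-weak agreement: |N(u) △ N(v)| < 4β·max(d(u), d(v)). -/

import Mathlib

open Finset Classical

noncomputable section

variable {V : Type*} [Fintype V] [DecidableEq V]

/-- Closed neighborhood of `v` in `G` (each vertex is its own neighbor). -/
def closedNbhd (G : SimpleGraph V) (v : V) : Finset V :=
  insert v (G.neighborFinset v)

/-- Degree `d(v) = |N(v)|` (closed neighborhoods). -/
def deg (G : SimpleGraph V) (v : V) : ℕ := (closedNbhd G v).card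

/-- `u` and `v` are in agreement: `|N(u) △ N(v)| < β·max(d(u), d(v))`. -/
def Agree (β : ℝ) (G : SimpleGraph V) (u v : V) : Prop :=
  ((symmDiff (closedNbhd G u) (closedNbhd G v)).card : ℝ)
    < β * max (deg G u : ℝ) (deg G v : ℝ)

/-- The graph after Line 1: discard all edges whose endpoints are not in agreement. -/
def agreeGraph (β : ℝ) (G : SimpleGraph V) : SimpleGraph V where
  Adj u v := G.Adj u v ∧ Agree β G u v
  symm := by
    constructor
    intro a b h
    refine ⟨h.1.symm, ?_⟩
    have := h.2
    unfold Agree at *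
    rwa [symmDiff_comm, max_comm] at this
  loopless := ⟨fun a h => G.loopless.irrefl a h.1⟩

/-- A vertex is light if it lost more than a `λ`-fraction of its neighbors
when passing from `G` to the agreement graph. -/
def Light (β lam : ℝ) (G : SimpleGraph V) (v : V) : Prop :=
  (deg G v : ℝ) - (deg (agreeGraph β G) v : ℝ) > lam * (deg G v : ℝ)

/-- A vertex is heavy if it is not light. -/
def Heavy (β lam : ℝ) (G : SimpleGraph V) (v : V) : Prop := ¬ Light β lam G v

/-- The sparsified graph `G̃`: additionally discard all edges between two
light vertices. -/
def sparsified (β lam : ℝ) (G : SimpleGraph V) : SimpleGraph V where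
  Adj u v := (agreeGraph β G).Adj u v ∧ (Heavy β lam G u ∨ Heavy β lam G v)
  symm := ⟨fun a b h => ⟨h.1.symm, h.2.symm⟩⟩
  loopless := ⟨fun a h => (agreeGraph β G).loopless.irrefl a h.1⟩

/-!
Along an agreement edge `x ~ z` one has `(1 - β) d(z) ≤ d(x)` and `(1 - β) |N(x) △ N(z)| ≤ β d(x)`;
summing along a walk of length `k` gives `(1 - kβ) |N(x) △ N(y)| ≤ kβ d(x)`. Two heavy vertices joined
by a `G̃`-walk of length at most `4` therefore have `|N(x) △ N(y)| ≤ 5β d(x)`, and since each keeps a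
`(1 - λ)`-fraction of its neighbours, `5β + 2λ < 1` forces a common neighbour in the agreement graph,
hence a `G̃`-walk of length at most `2`. As every `G̃`-edge has a heavy endpoint, an induction along a
walk puts every vertex of the component of a heavy vertex within `G̃`-distance `3` of it, and the walk
bound with `k = 3` gives `|N(u) △ N(v)| < 4β max(d(u), d(v))` because `β < 1/12`.
-/

theorem Finset.card_union_le_card_add_card_symmDiff {α : Type*} [DecidableEq α] (s t : Finset α) :
    #(s ∪ t) ≤ #s + #(symmDiff s t) := by
  rw [union_comm, ← card_sdiff_add_card t s, add_comm]
  exact Nat.add_le_add_left (card_le_card symmDiff_subset_sdiff') _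

theorem Finset.card_symmDiff_le_add {α : Type*} [DecidableEq α] (s t u : Finset α) :
    #(symmDiff s u) ≤ #(symmDiff s t) + #(symmDiff t u) :=
  (card_le_card (symmDiff_triangle s t u)).trans (card_union_le _ _)

namespace SimpleGraph

theorem Reachable.edist_le_three {α : Type*} {H : SimpleGraph α} {P : α → Prop}
    {x y : α} (hxy : H.Reachable x y) (hy : P y)
    (hedge : ∀ a b, H.Adj a b → P a ∨ P b)
    (hshort : ∀ a b, P a → P b → H.edist a b ≤ 4 → H.edist a b ≤ 2) :
    H.edist x y ≤ 3 := by
  obtain ⟨p⟩ := hxy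
  suffices (P x → H.edist x y ≤ 2) ∧ H.edist x y ≤ 3 from this.2
  induction p with
  | nil => simp
  | @cons x z y hxz q ih =>
    replace ih := ih hy
    have hx1 : H.edist x z ≤ 1 := edist_le_one_iff_adj_or_eq.2 (.inl hxz)
    have hx4 : H.edist x y ≤ 4 := calc
      H.edist x y ≤ H.edist x z + H.edist z y := H.edist_triangle
      _ ≤ 1 + 3 := add_le_add hx1 ih.2
      _ = 4 := by norm_num
    have hPx : P x → H.edist x y ≤ 2 := fun hx => hshort x y hx hy hx4
    refine ⟨hPx, ?_⟩
    rcases hedge x z hxz with hx | hz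
    · exact (hPx hx).trans (by norm_num)
    · calc H.edist x y ≤ H.edist x z + H.edist z y := H.edist_triangle
        _ ≤ 1 + 2 := add_le_add hx1 (ih.1 hz)
        _ = 3 := by norm_num

end SimpleGraph

theorem mem_closedNbhd {G : SimpleGraph V} {v w : V} :
    w ∈ closedNbhd G v ↔ w = v ∨ G.Adj v w := by
  simp [closedNbhd]

theorem closedNbhd_mono {H G : SimpleGraph V} (h : H ≤ G) (v : V) :
    closedNbhd H v ⊆ closedNbhd G v := fun _ hw =>
  mem_closedNbhd.2 ((mem_closedNbhd.1 hw).imp_right (@h _ _))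

theorem one_le_deg (G : SimpleGraph V) (v : V) : (1 : ℝ) ≤ deg G v := by
  have : 0 < deg G v := card_pos.2 ⟨v, mem_insert_self _ _⟩
  exact_mod_cast this

theorem deg_le_deg_add_card_symmDiff (G : SimpleGraph V) (x z : V) :
    (deg G z : ℝ) ≤ deg G x + #(symmDiff (closedNbhd G x) (closedNbhd G z)) := by
  have h := (card_le_card (subset_union_right (s₁ := closedNbhd G x))).trans
    (card_union_le_card_add_card_symmDiff (closedNbhd G x) (closedNbhd G z))
  exact_mod_cast h

theorem agreeGraph_le (β : ℝ) (G : SimpleGraph V) : agreeGraph β G ≤ G :=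
  fun _ _ h => h.1

theorem sparsified_le_agreeGraph (β lam : ℝ) (G : SimpleGraph V) :
    sparsified β lam G ≤ agreeGraph β G :=
  fun _ _ h => h.1

section Sparsification

variable {β lam : ℝ} {G : SimpleGraph V}

theorem Agree.mul_deg_le {x z : V} (h : Agree β G x z) (hβ : 0 ≤ β) :
    (1 - β) * deg G z ≤ deg G x := by
  have hd := deg_le_deg_add_card_symmDiff G x z
  unfold Agree at h
  rcases le_total (deg G z : ℝ) (deg G x) with hc | hc
  · nlinarith [one_le_deg G z]
  · rw [max_eq_right hc] at h
    linarith

theorem Agree.mul_card_symmDiff_le {x z : V} (h : Agree β G x z) (hβ : 0 ≤ β) :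
    (1 - β) * #(symmDiff (closedNbhd G x) (closedNbhd G z)) ≤ β * deg G x := by
  have hd := deg_le_deg_add_card_symmDiff G x z
  unfold Agree at h
  rcases le_total (deg G z : ℝ) (deg G x) with hc | hc
  · rw [max_eq_left hc] at h
    nlinarith
  · rw [max_eq_right hc] at h
    nlinarith

theorem mul_card_symmDiff_le_of_walk (hβ0 : 0 ≤ β) (hβ1 : β ≤ 1) {x y : V}
    (p : (agreeGraph β G).Walk x y) :
    (1 - p.length * β) * #(symmDiff (closedNbhd G x) (closedNbhd G y))
      ≤ p.length * β * deg G x := by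
  induction p with
  | nil => simp
  | @cons x z y h q ih =>
    have hxz := h.2.mul_card_symmDiff_le hβ0
    have hdeg := h.2.mul_deg_le hβ0
    have htri : (#(symmDiff (closedNbhd G x) (closedNbhd G y)) : ℝ)
        ≤ #(symmDiff (closedNbhd G x) (closedNbhd G z))
          + #(symmDiff (closedNbhd G z) (closedNbhd G y)) := by
      exact_mod_cast card_symmDiff_le_add _ (closedNbhd G z) _
    rw [SimpleGraph.Walk.length_cons, Nat.cast_succ]
    set k : ℝ := (q.length : ℝ)
    have hk : 0 ≤ k * β := mul_nonneg (Nat.cast_nonneg _) hβ0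
    rcases le_or_gt 0 (1 - (k + 1) * β) with hpos | hneg
    · have h1 : (1 - (k + 1) * β) * #(symmDiff (closedNbhd G x) (closedNbhd G z))
          ≤ β * deg G x := by
        nlinarith
      have h2 : (1 - (k + 1) * β) * #(symmDiff (closedNbhd G z) (closedNbhd G y))
          ≤ k * β * deg G x := by
        nlinarith [mul_nonneg hk hβ0, mul_le_mul_of_nonneg_left ih (by linarith : 0 ≤ 1 - β),
          mul_le_mul_of_nonneg_left hdeg hk]
      nlinarith
    · nlinarith [mul_nonneg hk (Nat.cast_nonneg (α := ℝ) (deg G x))]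

theorem mul_card_symmDiff_le_of_edist_le (hβ0 : 0 ≤ β) (hβ1 : β ≤ 1) {x y : V} {n : ℕ}
    (h : (agreeGraph β G).edist x y ≤ n) :
    (1 - n * β) * #(symmDiff (closedNbhd G x) (closedNbhd G y)) ≤ n * β * deg G x := by
  obtain ⟨p, hp⟩ := SimpleGraph.exists_walk_of_edist_ne_top (ne_top_of_le_ne_top (by simp) h)
  have hpn : (p.length : ℝ) ≤ n := by
    rw [← hp] at h
    exact_mod_cast h
  calc (1 - n * β) * #(symmDiff (closedNbhd G x) (closedNbhd G y))
      ≤ (1 - p.length * β) * #(symmDiff (closedNbhd G x) (closedNbhd G y)) := by gcongr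
    _ ≤ p.length * β * deg G x := mul_card_symmDiff_le_of_walk hβ0 hβ1 p
    _ ≤ n * β * deg G x := by gcongr

theorem Heavy.mul_deg_le {v : V} (h : Heavy β lam G v) :
    (1 - lam) * deg G v ≤ #(closedNbhd (agreeGraph β G) v) := by
  unfold Heavy Light at h
  rw [not_lt] at h
  have : (deg (agreeGraph β G) v : ℝ) = #(closedNbhd (agreeGraph β G) v) := rfl
  linarith

theorem Heavy.edist_sparsified_le_one {x z : V} (hx : Heavy β lam G x)
    (hz : z ∈ closedNbhd (agreeGraph β G) x) :
    (sparsified β lam G).edist x z ≤ 1 := by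
  rw [SimpleGraph.edist_le_one_iff_adj_or_eq]
  rcases mem_closedNbhd.1 hz with rfl | hxz
  · exact .inr rfl
  · exact .inl ⟨hxz, .inl hx⟩

theorem inter_closedNbhd_agreeGraph_nonempty {x y : V} (hlam : 0 ≤ lam)
    (hx : Heavy β lam G x) (hy : Heavy β lam G y)
    (hS : #(symmDiff (closedNbhd G x) (closedNbhd G y))
      < (1 - 2 * lam) * max (deg G x : ℝ) (deg G y)) :
    (closedNbhd (agreeGraph β G) x ∩ closedNbhd (agreeGraph β G) y).Nonempty := by
  set A := closedNbhd (agreeGraph β G) x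
  set B := closedNbhd (agreeGraph β G) y
  have hunion : A ∪ B ⊆ closedNbhd G x ∪ closedNbhd G y :=
    union_subset_union (closedNbhd_mono (agreeGraph_le β G) x)
      (closedNbhd_mono (agreeGraph_le β G) y)
  have hux : (#(A ∪ B) : ℝ) ≤ deg G x + #(symmDiff (closedNbhd G x) (closedNbhd G y)) := by
    exact_mod_cast (card_le_card hunion).trans (card_union_le_card_add_card_symmDiff _ _)
  have huy : (#(A ∪ B) : ℝ) ≤ deg G y + #(symmDiff (closedNbhd G x) (closedNbhd G y)) := by
    rw [union_comm (closedNbhd G x)] at hunion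
    rw [symmDiff_comm]
    exact_mod_cast (card_le_card hunion).trans (card_union_le_card_add_card_symmDiff _ _)
  have hcard : (#(A ∩ B) : ℝ) + #(A ∪ B) = #A + #B := by
    exact_mod_cast card_inter_add_card_union A B
  have hA := hx.mul_deg_le
  have hB := hy.mul_deg_le
  rw [← card_pos, ← Nat.cast_pos (α := ℝ)]
  rcases le_total (deg G x : ℝ) (deg G y) with hxy | hxy
  · rw [max_eq_right hxy] at hS
    nlinarith [mul_le_mul_of_nonneg_left hxy hlam]
  · rw [max_eq_left hxy] at hS
    nlinarith [mul_le_mul_of_nonneg_left hxy hlam]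

theorem edist_sparsified_le_two {x y : V} (hlam : 0 ≤ lam)
    (hx : Heavy β lam G x) (hy : Heavy β lam G y)
    (hS : #(symmDiff (closedNbhd G x) (closedNbhd G y))
      < (1 - 2 * lam) * max (deg G x : ℝ) (deg G y)) :
    (sparsified β lam G).edist x y ≤ 2 := by
  obtain ⟨z, hz⟩ := inter_closedNbhd_agreeGraph_nonempty hlam hx hy hS
  calc (sparsified β lam G).edist x y
      ≤ (sparsified β lam G).edist x z + (sparsified β lam G).edist z y :=
        SimpleGraph.edist_triangle
    _ ≤ 1 + 1 := by
        rw [SimpleGraph.edist_comm (u := z)]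
        exact add_le_add (hx.edist_sparsified_le_one (mem_inter.1 hz).1)
          (hy.edist_sparsified_le_one (mem_inter.1 hz).2)
    _ = 2 := by norm_num

theorem edist_sparsified_le_two_of_le_four {x y : V} (hβ0 : 0 ≤ β) (hβ : β ≤ 1 / 20)
    (hlam : 0 ≤ lam) (hparams : 5 * β + 2 * lam < 1)
    (hx : Heavy β lam G x) (hy : Heavy β lam G y) (h4 : (sparsified β lam G).edist x y ≤ 4) :
    (sparsified β lam G).edist x y ≤ 2 := by
  have hS := mul_card_symmDiff_le_of_edist_le (n := 4) hβ0 (by linarith)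
    ((SimpleGraph.edist_anti (sparsified_le_agreeGraph β lam G)).trans h4)
  push_cast at hS
  have hS5 : (#(symmDiff (closedNbhd G x) (closedNbhd G y)) : ℝ) ≤ 5 * β * deg G x := by
    nlinarith [Nat.cast_nonneg (α := ℝ) (deg G x),
      Nat.cast_nonneg (α := ℝ) #(symmDiff (closedNbhd G x) (closedNbhd G y))]
  refine edist_sparsified_le_two hlam hx hy (hS5.trans_lt ?_)
  have hM : (deg G x : ℝ) ≤ max (deg G x : ℝ) (deg G y) := le_max_left _ _
  nlinarith [one_le_deg G x]

end Sparsification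

/-- if `5β + 2λ < 1` and `β < 1/20`, and `u`, `v` lie in the
same connected component of the sparsified graph `G̃` with at least one of
them heavy, then `u` and `v` are in 4-weak agreement. -/
theorem stmt7 (G : SimpleGraph V) (β lam : ℝ)
    (hβ0 : 0 < β) (hβ : β < 1 / 20) (hlam0 : 0 < lam)
    (hparams : 5 * β + 2 * lam < 1)
    (u v : V)
    (hheavy : Heavy β lam G u ∨ Heavy β lam G v)
    (hreach : (sparsified β lam G).Reachable u v) :
    ((symmDiff (closedNbhd G u) (closedNbhd G v)).card : ℝ)
      < 4 * β * max (deg G u : ℝ) (deg G v : ℝ) := by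
  have hedge : ∀ a b, (sparsified β lam G).Adj a b → Heavy β lam G a ∨ Heavy β lam G b :=
    fun _ _ h => h.2
  have hshort : ∀ a b, Heavy β lam G a → Heavy β lam G b →
      (sparsified β lam G).edist a b ≤ 4 → (sparsified β lam G).edist a b ≤ 2 :=
    fun _ _ ha hb => edist_sparsified_le_two_of_le_four hβ0.le hβ.le hlam0.le hparams ha hb
  have h3 : (sparsified β lam G).edist u v ≤ 3 := by
    rcases hheavy with hu | hv
    · rw [SimpleGraph.edist_comm]
      exact hreach.symm.edist_le_three hu hedge hshort
    · exact hreach.edist_le_three hv hedge hshort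
  have hS := mul_card_symmDiff_le_of_edist_le (n := 3) hβ0.le (by linarith)
    ((SimpleGraph.edist_anti (sparsified_le_agreeGraph β lam G)).trans h3)
  push_cast at hS
  have hM : (deg G u : ℝ) ≤ max (deg G u : ℝ) (deg G v) := le_max_left _ _
  nlinarith [one_le_deg G u]

end
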